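/- arXiv:1712.02737 — 2 statements merged into one kernel-verified Lean document; each statement's English description precedes it below -/
import Mathlib

section
/- Suppose (p - q : ℤ) % 8 ∈ {0, 1, 4, 5}. Then the Clifford algebra splits as the internal direct sum of the ±1-eigenspaces of right multiplication by ω: the ℝ-submodules Γ₊ := {x ∈ CliffordAlgebra Q | x * ω = x} and Γ₋ := {x ∈ CliffordAlgebra Q | x * ω = -x} are complementary, i.e. every x ∈ CliffordAlgebra Q is uniquely expressible as x = a + b with a ∈ Γ₊ and b ∈ Γ₋. -/
open CliffordAlgebra ExteriorAlgebra

/-- The Graf product on the exterior algebra: Clifford multiplication transported through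
the canonical linear equivalence `CliffordAlgebra.equivExterior Q`. -/
noncomputable def graf {V : Type*} [AddCommGroup V] [Module ℝ V] (Q : QuadraticForm ℝ V)
    (a b : ExteriorAlgebra ℝ V) : ExteriorAlgebra ℝ V :=
  CliffordAlgebra.equivExterior Q ((CliffordAlgebra.equivExterior Q).symm a *
    (CliffordAlgebra.equivExterior Q).symm b)

/-- The volume element of the Clifford algebra: the ordered product
`ι (e 0) * ι (e 1) * ⋯ * ι (e (n-1))`. -/
noncomputable def cliffVol {V : Type*} [AddCommGroup V] [Module ℝ V] {n : ℕ}
    (Q : QuadraticForm ℝ V) (e : Module.Basis (Fin n) ℝ V) : CliffordAlgebra Q :=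
  ((List.finRange n).map fun i => CliffordAlgebra.ι Q (e i)).prod

/-- The volume form in the exterior algebra. -/
noncomputable def volForm {V : Type*} [AddCommGroup V] [Module ℝ V] {n : ℕ}
    (Q : QuadraticForm ℝ V) (e : Module.Basis (Fin n) ℝ V) : ExteriorAlgebra ℝ V :=
  CliffordAlgebra.equivExterior Q (cliffVol Q e)

/-- The Hodge operator `⋆ f := f ⋄ v`. -/
noncomputable def hodge {V : Type*} [AddCommGroup V] [Module ℝ V] {n : ℕ}
    (Q : QuadraticForm ℝ V) (e : Module.Basis (Fin n) ℝ V) (f : ExteriorAlgebra ℝ V) :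
    ExteriorAlgebra ℝ V :=
  graf Q f (volForm Q e)

/-- `P₊ g := (1/2) • (g + ⋆g)`. -/
noncomputable def Pplus {V : Type*} [AddCommGroup V] [Module ℝ V] {n : ℕ}
    (Q : QuadraticForm ℝ V) (e : Module.Basis (Fin n) ℝ V) (g : ExteriorAlgebra ℝ V) :
    ExteriorAlgebra ℝ V :=
  (1/2 : ℝ) • (g + hodge Q e g)

/-- `P₋ g := (1/2) • (g - ⋆g)`. -/
noncomputable def Pminus {V : Type*} [AddCommGroup V] [Module ℝ V] {n : ℕ}
    (Q : QuadraticForm ℝ V) (e : Module.Basis (Fin n) ℝ V) (g : ExteriorAlgebra ℝ V) :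
    ExteriorAlgebra ℝ V :=
  (1/2 : ℝ) • (g - hodge Q e g)

/-- Lower truncation: the projection keeping graded components of degrees `0, …, n/2`
and annihilating degrees `n/2 + 1, …`. -/
noncomputable def PLow {V : Type*} [AddCommGroup V] [Module ℝ V] (n : ℕ)
    (f : ExteriorAlgebra ℝ V) : ExteriorAlgebra ℝ V :=
  ∑ k ∈ Finset.range (n / 2 + 1),
    (DirectSum.decompose (fun i : ℕ => ⋀[ℝ]^i V) f k : ExteriorAlgebra ℝ V)

/-- Truncated Graf product `f ◆₊ g := 2 • P_L (P₊ f ⋄ P₊ g)`. -/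
noncomputable def tGrafP {V : Type*} [AddCommGroup V] [Module ℝ V] {n : ℕ}
    (Q : QuadraticForm ℝ V) (e : Module.Basis (Fin n) ℝ V) (f g : ExteriorAlgebra ℝ V) :
    ExteriorAlgebra ℝ V :=
  (2 : ℝ) • PLow n (graf Q (Pplus Q e f) (Pplus Q e g))

/-- Truncated Graf product `f ◆₋ g := 2 • P_L (P₋ f ⋄ P₋ g)`. -/
noncomputable def tGrafM {V : Type*} [AddCommGroup V] [Module ℝ V] {n : ℕ}
    (Q : QuadraticForm ℝ V) (e : Module.Basis (Fin n) ℝ V) (f g : ExteriorAlgebra ℝ V) :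
    ExteriorAlgebra ℝ V :=
  (2 : ℝ) • PLow n (graf Q (Pminus Q e f) (Pminus Q e g))


section AuxEigen

variable {V : Type*} [AddCommGroup V] [Module ℝ V] (Q : QuadraticForm ℝ V)

private lemma listAnti_aux (v : V) :
    ∀ (l : List V), (∀ w ∈ l, QuadraticMap.polar Q v w = 0) →
      (l.map (CliffordAlgebra.ι Q)).prod * CliffordAlgebra.ι Q v
        = ((-1 : ℝ) ^ l.length) • (CliffordAlgebra.ι Q v * (l.map (CliffordAlgebra.ι Q)).prod)
  | [], _ => by simp
  | w :: t, h => by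
    have ht := listAnti_aux v t (fun x hx => h x (List.mem_cons_of_mem _ hx))
    have hw : CliffordAlgebra.ι Q w * CliffordAlgebra.ι Q v
        = - (CliffordAlgebra.ι Q v * CliffordAlgebra.ι Q w) := by
      have h2 := CliffordAlgebra.ι_mul_ι_add_swap (Q := Q) w v
      rw [QuadraticMap.polar_comm, h (w) List.mem_cons_self, map_zero] at h2
      exact eq_neg_of_add_eq_zero_left h2
    simp only [List.map_cons, List.prod_cons, List.length_cons, mul_assoc, ht, pow_succ]
    rw [mul_smul_comm, ← mul_assoc, hw]
    simp [smul_smul, mul_comm, mul_assoc]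

private lemma listSq_aux :
    ∀ (l : List V), l.Pairwise (fun a b => QuadraticMap.polar Q a b = 0) →
      (l.map (CliffordAlgebra.ι Q)).prod * (l.map (CliffordAlgebra.ι Q)).prod
        = algebraMap ℝ _ (((-1 : ℝ) ^ (l.length.choose 2)) * (l.map Q).prod)
  | [], _ => by simp
  | v :: t, h => by
    rw [List.pairwise_cons] at h
    obtain ⟨h1, h2⟩ := h
    have ht := listSq_aux t h2
    have ha := listAnti_aux Q v t h1
    set P := (t.map (CliffordAlgebra.ι Q)).prod with hP
    set k := t.length with hk
    calc (CliffordAlgebra.ι Q v * P) * (CliffordAlgebra.ι Q v * P)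
        = CliffordAlgebra.ι Q v * ((P * CliffordAlgebra.ι Q v) * P) := by simp [mul_assoc]
      _ = ((-1 : ℝ) ^ k) • (CliffordAlgebra.ι Q v * (CliffordAlgebra.ι Q v * (P * P))) := by
          rw [ha]; simp [smul_mul_assoc, mul_smul_comm, mul_assoc]
      _ = ((-1 : ℝ) ^ k) • ((algebraMap ℝ _ (Q v)) *
            algebraMap ℝ _ (((-1 : ℝ) ^ (k.choose 2)) * (t.map Q).prod)) := by
          rw [← mul_assoc, CliffordAlgebra.ι_sq_scalar, ht]
      _ = algebraMap ℝ _ (((-1 : ℝ) ^ ((v :: t).length.choose 2)) * ((v :: t).map Q).prod) := by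
          rw [← map_mul, Algebra.smul_def, ← map_mul]
          congr 1
          have : (v :: t).length.choose 2 = k.choose 2 + k := by
            simp [Nat.choose_succ_succ, Nat.choose_one_right, Nat.add_comm, hk]
          rw [this, pow_add]
          simp only [List.map_cons, List.prod_cons]
          ring

private lemma ch2_add4_aux (k : ℕ) : (k + 4).choose 2 = k.choose 2 + (4 * k + 6) := by
  show (k + 3 + 1).choose 2 = _
  simp only [Nat.choose_succ_succ, Nat.choose_one_right, Nat.choose_zero_right,
    Nat.succ_eq_add_one]
  norm_num [Nat.choose_one_right]
  omega

private lemma ch2_mod_aux (n : ℕ) : n.choose 2 % 2 = (n % 4).choose 2 % 2 := by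
  induction n using Nat.strong_induction_on with
  | _ n ih =>
    rcases Nat.lt_or_ge n 4 with h | h
    · rw [Nat.mod_eq_of_lt h]
    · obtain ⟨m, rfl⟩ : ∃ m, n = m + 4 := ⟨n - 4, by omega⟩
      rw [ch2_add4_aux, Nat.add_mod_right]
      have := ih m (by omega)
      omega

private lemma parity_key_aux (p q n : ℕ) (hn : n = p + q)
    (hsig : ((p : ℤ) - q) % 8 = 0 ∨ ((p : ℤ) - q) % 8 = 1 ∨
      ((p : ℤ) - q) % 8 = 4 ∨ ((p : ℤ) - q) % 8 = 5) :
    (n.choose 2 + q) % 2 = 0 := by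
  have h := ch2_mod_aux n
  have h4 : n % 4 = 0 ∨ n % 4 = 1 ∨ n % 4 = 2 ∨ n % 4 = 3 := by omega
  rcases h4 with h4 | h4 | h4 | h4 <;> rw [h4] at h <;> norm_num at h <;> omega

end AuxEigen

/-- for signatures with p - q ≡ 0,1,4,5 (mod 8), every element is
uniquely the sum of a +1- and a -1-eigenvector of right multiplication by ω. -/
theorem eigenspace_splitting
    (p q n : ℕ) (hn : n = p + q)
    {V : Type*} [AddCommGroup V] [Module ℝ V]
    (Q : QuadraticForm ℝ V) (e : Module.Basis (Fin n) ℝ V)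
    (horth : ∀ i j : Fin n, i ≠ j → QuadraticMap.polar Q (e i) (e j) = 0)
    (hQpos : ∀ i : Fin n, (i : ℕ) < p → Q (e i) = 1)
    (hQneg : ∀ i : Fin n, p ≤ (i : ℕ) → Q (e i) = -1)
    (hsig : ((p : ℤ) - q) % 8 ∈ ({0, 1, 4, 5} : Set ℤ)) :
    ∀ x : CliffordAlgebra Q,
      ∃! ab : CliffordAlgebra Q × CliffordAlgebra Q,
        ab.1 * cliffVol Q e = ab.1 ∧ ab.2 * cliffVol Q e = -ab.2 ∧ x = ab.1 + ab.2 := by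
  intro x
  have hpn : p ≤ n := by omega
  -- Step 1: the volume element squares to 1.
  have hvol : cliffVol Q e * cliffVol Q e = 1 := by
    have hlist : cliffVol Q e = (((List.finRange n).map e).map (CliffordAlgebra.ι Q)).prod := by
      rw [cliffVol, List.map_map]; rfl
    have hpw : ((List.finRange n).map e).Pairwise
        (fun a b => QuadraticMap.polar Q a b = 0) :=
      List.Pairwise.map e (fun a b h => horth a b h) (List.nodup_finRange n)
    have hsq := listSq_aux Q _ hpw
    rw [hlist, hsq]
    have hlen : ((List.finRange n).map e).length = n := by simp
    have hprodQ : ((((List.finRange n).map e)).map Q).prod = (-1 : ℝ) ^ q := by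
      rw [List.map_map, ← Fin.prod_univ_def]
      calc ∏ i : Fin n, (⇑Q ∘ e) i
          = ∏ i : Fin n, (fun j : ℕ => if j < p then (1 : ℝ) else -1) (i : ℕ) := by
            refine Finset.prod_congr rfl (fun i _ => ?_)
            by_cases h : (i : ℕ) < p
            · simp [h, hQpos i h]
            · simp [h, hQneg i (le_of_not_gt h)]
        _ = ∏ j ∈ Finset.range n, (if j < p then (1 : ℝ) else -1) :=
            by exact Fin.prod_univ_eq_prod_range (fun j => if j < p then (1 : ℝ) else -1) n
        _ = (∏ j ∈ Finset.range p, (if j < p then (1 : ℝ) else -1)) *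
              ∏ j ∈ Finset.Ico p n, (if j < p then (1 : ℝ) else -1) :=
            (Finset.prod_range_mul_prod_Ico _ hpn).symm
        _ = (-1 : ℝ) ^ q := by
            have h1 : ∏ j ∈ Finset.range p, (if j < p then (1 : ℝ) else -1) = 1 :=
              Finset.prod_eq_one (fun j hj => by simp [Finset.mem_range.mp hj])
            have h2 : ∏ j ∈ Finset.Ico p n, (if j < p then (1 : ℝ) else -1)
                = ∏ _j ∈ Finset.Ico p n, (-1 : ℝ) :=
              Finset.prod_congr rfl (fun j hj => by
                have := (Finset.mem_Ico.mp hj).1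
                simp [Nat.not_lt.mpr this])
            rw [h1, one_mul, h2, Finset.prod_const, Nat.card_Ico]
            congr 1
            omega
    rw [hlen, hprodQ, ← pow_add]
    have hsig' : ((p : ℤ) - q) % 8 = 0 ∨ ((p : ℤ) - q) % 8 = 1 ∨
        ((p : ℤ) - q) % 8 = 4 ∨ ((p : ℤ) - q) % 8 = 5 := by
      simpa [Set.mem_insert_iff] using hsig
    have heven : Even (n.choose 2 + q) :=
      Nat.even_iff.mpr (parity_key_aux p q n hn hsig')
    rw [heven.neg_one_pow, map_one]
  set ω := cliffVol Q e with hω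
  refine ⟨((2⁻¹ : ℝ) • (x + x * ω), (2⁻¹ : ℝ) • (x - x * ω)), ⟨?_, ?_, ?_⟩, ?_⟩
  · show ((2⁻¹ : ℝ) • (x + x * ω)) * ω = (2⁻¹ : ℝ) • (x + x * ω)
    rw [smul_mul_assoc, add_mul, mul_assoc, hvol, mul_one, add_comm]
  · show ((2⁻¹ : ℝ) • (x - x * ω)) * ω = -((2⁻¹ : ℝ) • (x - x * ω))
    rw [smul_mul_assoc, sub_mul, mul_assoc, hvol, mul_one, ← smul_neg, neg_sub]
  · show x = (2⁻¹ : ℝ) • (x + x * ω) + (2⁻¹ : ℝ) • (x - x * ω)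
    module
  · rintro ⟨a, b⟩ ⟨ha, hb, hx⟩
    simp only at ha hb hx
    have hxω : x * ω = a - b := by
      rw [hx, add_mul, ha, hb, sub_eq_add_neg]
    have hA : a = (2⁻¹ : ℝ) • (x + x * ω) := by rw [hxω, hx]; module
    have hB : b = (2⁻¹ : ℝ) • (x - x * ω) := by rw [hxω, hx]; module
    exact Prod.ext hA hB
end

section
/- Suppose n is odd and (p - q : ℤ) % 8 ∈ {0, 1, 4, 5}. Then 1 is a two-sided unit for the truncated Graf product on the lower-truncated subspace: for every f ∈ Λ(V) with P_L f = f, one has f ◆₊ 1 = f = 1 ◆₊ f and f ◆₋ 1 = f = 1 ◆₋ f. -/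
open CliffordAlgebra ExteriorAlgebra

section Aux
variable {V : Type*} [AddCommGroup V] [Module ℝ V] {n : ℕ}
variable (Q : QuadraticForm ℝ V) (e : Module.Basis (Fin n) ℝ V)

noncomputable def cliffList (l : List (Fin n)) : CliffordAlgebra Q :=
  (l.map fun i => CliffordAlgebra.ι Q (e i)).prod

noncomputable def wedgeList (l : List (Fin n)) : ExteriorAlgebra ℝ V :=
  (l.map fun i => ExteriorAlgebra.ι ℝ (e i)).prod

@[simp] lemma cliffList_nil : cliffList Q e [] = 1 := rfl
@[simp] lemma cliffList_cons (a : Fin n) (l : List (Fin n)) :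
    cliffList Q e (a :: l) = CliffordAlgebra.ι Q (e a) * cliffList Q e l := by
  simp [cliffList]
@[simp] lemma wedgeList_nil : wedgeList e [] = 1 := rfl
@[simp] lemma wedgeList_cons (a : Fin n) (l : List (Fin n)) :
    wedgeList e (a :: l) = ExteriorAlgebra.ι ℝ (e a) * wedgeList e l := by
  simp [wedgeList]

variable (horth : ∀ i j : Fin n, i ≠ j → QuadraticMap.polar Q (e i) (e j) = 0)

include horth in
lemma ι_anticomm {i j : Fin n} (h : i ≠ j) :
    CliffordAlgebra.ι Q (e i) * CliffordAlgebra.ι Q (e j)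
      = -(CliffordAlgebra.ι Q (e j) * CliffordAlgebra.ι Q (e i)) := by
  refine eq_neg_of_add_eq_zero_left ?_
  rw [CliffordAlgebra.ι_mul_ι_add_swap, horth i j h, map_zero]

include horth in
lemma mul_cliffList_erase {a : Fin n} :
    ∀ {l : List (Fin n)}, a ∈ l →
      ∃ c : ℝ, CliffordAlgebra.ι Q (e a) * cliffList Q e l = c • cliffList Q e (l.erase a)
  | [], h => absurd h (List.not_mem_nil)
  | b :: t, h => by
    rcases eq_or_ne a b with rfl | hab
    · refine ⟨Q (e a), ?_⟩
      rw [List.erase_cons_head, cliffList_cons, ← mul_assoc, CliffordAlgebra.ι_sq_scalar,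
        Algebra.algebraMap_eq_smul_one, smul_mul_assoc, one_mul]
    · have ht : a ∈ t := by
        rcases List.mem_cons.1 h with h' | h'
        · exact absurd h' hab
        · exact h'
      obtain ⟨c, hc⟩ := mul_cliffList_erase (l := t) ht
      refine ⟨-c, ?_⟩
      rw [List.erase_cons_tail (by simpa using fun h => hab h.symm), cliffList_cons,
        cliffList_cons, ← mul_assoc, ι_anticomm Q e horth hab, neg_mul, mul_assoc, hc,
        mul_smul_comm, ← neg_smul]

include horth in
lemma cliffList_mul_diff :
    ∀ (s : List (Fin n)) (l : List (Fin n)), s.Nodup → (∀ i ∈ s, i ∈ l) →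
      ∃ c : ℝ, cliffList Q e s * cliffList Q e l = c • cliffList Q e (l.diff s)
  | [], l, _, _ => ⟨1, by simp⟩
  | a :: s, l, hnd, hsub => by
    obtain ⟨c, hc⟩ := cliffList_mul_diff s l (List.Nodup.of_cons hnd)
      (fun i hi => hsub i (List.mem_cons_of_mem _ hi))
    have ha : a ∈ l.diff s :=
      List.mem_diff_of_mem (hsub a (List.mem_cons_self)) (hnd.notMem)
    obtain ⟨c', hc'⟩ := mul_cliffList_erase Q e horth ha
    refine ⟨c * c', ?_⟩
    rw [cliffList_cons, mul_assoc, hc, mul_smul_comm, hc', List.diff_cons, ← List.diff_cons_right,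
      List.diff_cons, smul_smul]


lemma cliffList_append (l₁ l₂ : List (Fin n)) :
    cliffList Q e (l₁ ++ l₂) = cliffList Q e l₁ * cliffList Q e l₂ := by
  simp [cliffList]

@[simp] lemma cliffList_singleton (a : Fin n) :
    cliffList Q e [a] = CliffordAlgebra.ι Q (e a) := by
  simp [cliffList]

lemma cliffList_mul_reverse :
    ∀ l : List (Fin n), cliffList Q e l * cliffList Q e l.reverse
      = ((l.map fun i => Q (e i)).prod) • 1
  | [] => by simp
  | a :: t => by
    rw [List.reverse_cons, cliffList_cons, cliffList_append, mul_assoc, ← mul_assoc (cliffList Q e t),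
      cliffList_mul_reverse t]
    rw [cliffList_singleton, List.map_cons, List.prod_cons, smul_mul_assoc, one_mul,
      mul_smul_comm, CliffordAlgebra.ι_sq_scalar, Algebra.algebraMap_eq_smul_one, smul_smul,
      mul_comm]

include horth in
lemma cliffList_mul_ι {a : Fin n} :
    ∀ {l : List (Fin n)}, a ∉ l →
      cliffList Q e l * CliffordAlgebra.ι Q (e a)
        = ((-1 : ℝ) ^ l.length) • (CliffordAlgebra.ι Q (e a) * cliffList Q e l)
  | [], _ => by simp
  | b :: t, h => by
    have hba : b ≠ a := fun hba => h (hba ▸ List.mem_cons_self)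
    have hat : a ∉ t := fun hat => h (List.mem_cons_of_mem _ hat)
    rw [cliffList_cons, mul_assoc, cliffList_mul_ι hat, mul_smul_comm, ← mul_assoc,
      ι_anticomm Q e horth hba, List.length_cons, pow_succ, neg_mul, smul_neg,
      mul_neg_one, neg_smul, mul_assoc]

include horth in
lemma ι_mul_cliffList {a : Fin n} {l : List (Fin n)} (h : a ∉ l) :
    CliffordAlgebra.ι Q (e a) * cliffList Q e l
      = ((-1 : ℝ) ^ l.length) • (cliffList Q e l * CliffordAlgebra.ι Q (e a)) := by
  rw [cliffList_mul_ι Q e horth h, smul_smul, ← pow_add, Even.neg_one_pow ⟨l.length, rfl⟩,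
    one_smul]

include horth in
lemma cliffList_reverse :
    ∀ {l : List (Fin n)}, l.Nodup →
      cliffList Q e l.reverse = ((-1 : ℝ) ^ (l.length.choose 2)) • cliffList Q e l
  | [], _ => by simp
  | a :: t, h => by
    rw [List.reverse_cons, cliffList_append, cliffList_reverse h.of_cons, cliffList_singleton,
      smul_mul_assoc, cliffList_mul_ι Q e horth h.notMem, smul_smul, List.length_cons,
      Nat.choose_succ_succ, Nat.choose_one_right, pow_add, cliffList_cons, mul_comm]

include horth in
lemma cliffList_sq {l : List (Fin n)} (h : l.Nodup) :
    cliffList Q e l * cliffList Q e l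
      = (((-1 : ℝ) ^ (l.length.choose 2)) * (l.map fun i => Q (e i)).prod) • 1 := by
  have h1 := cliffList_mul_reverse Q e l
  rw [cliffList_reverse Q e horth h, mul_smul_comm] at h1
  have h2 := congrArg (fun x => ((-1 : ℝ) ^ (l.length.choose 2)) • x) h1
  simpa [smul_smul, ← pow_add, Even.neg_one_pow (⟨l.length.choose 2, rfl⟩ : Even _), mul_assoc]
    using h2

include horth in
lemma ι_mul_vol (hodd : Odd n) (a : Fin n) :
    CliffordAlgebra.ι Q (e a) * cliffVol Q e = cliffVol Q e * CliffordAlgebra.ι Q (e a) := by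
  obtain ⟨l₁, l₂, hsplit⟩ := List.append_of_mem (List.mem_finRange a)
  have hnd : (List.finRange n).Nodup := List.nodup_finRange n
  rw [hsplit] at hnd
  have ha1 : a ∉ l₁ := fun h => (List.disjoint_of_nodup_append hnd h) (List.mem_cons_self)
  have ha2 : a ∉ l₂ := ((List.nodup_append.1 hnd).2.1).notMem
  have hlen : n = l₁.length + l₂.length + 1 := by
    have := congrArg List.length hsplit
    simpa [List.length_finRange, Nat.add_comm, Nat.add_assoc, Nat.add_left_comm] using this
  have hpar : (-1 : ℝ) ^ l₁.length = (-1 : ℝ) ^ l₂.length := by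
    rcases Nat.even_or_odd l₁.length with h1 | h1
    · have h2 : Even l₂.length := by
        rcases hodd with ⟨m, hm⟩; rw [Nat.even_iff] at h1 ⊢; omega
      rw [h1.neg_one_pow, h2.neg_one_pow]
    · have h2 : Odd l₂.length := by
        rcases hodd with ⟨m, hm⟩; rw [Nat.odd_iff] at h1 ⊢; omega
      rw [h1.neg_one_pow, h2.neg_one_pow]
  have key : cliffVol Q e = cliffList Q e (l₁ ++ a :: l₂) := by
    rw [← hsplit]; rfl
  rw [key, cliffList_append, cliffList_cons]
  conv_lhs => rw [← mul_assoc, ι_mul_cliffList Q e horth ha1]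
  conv_rhs => rw [mul_assoc, mul_assoc, cliffList_mul_ι Q e horth ha2]
  simp only [smul_mul_assoc, mul_smul_comm, mul_assoc]
  rw [hpar]


include horth in
lemma vol_central (hodd : Odd n) (x : CliffordAlgebra Q) :
    x * cliffVol Q e = cliffVol Q e * x := by
  induction x using CliffordAlgebra.induction with
  | algebraMap r => rw [← Algebra.commutes]
  | ι v =>
    have hv : CliffordAlgebra.ι Q v = ∑ i, e.repr v i • CliffordAlgebra.ι Q (e i) := by
      have := congrArg (CliffordAlgebra.ι Q) (e.sum_repr v)
      rw [map_sum] at this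
      simp only [map_smul] at this
      exact this.symm
    rw [hv, Finset.sum_mul, Finset.mul_sum]
    refine Finset.sum_congr rfl fun i _ => ?_
    rw [smul_mul_assoc, mul_smul_comm, ι_mul_vol Q e horth hodd i]
  | mul a b ha hb => rw [mul_assoc, hb, ← mul_assoc, ha, mul_assoc]
  | add a b ha hb => rw [add_mul, mul_add, ha, hb]

lemma cliffVol_eq : cliffVol Q e = cliffList Q e (List.finRange n) := rfl

include horth in
lemma vol_sq' : cliffVol Q e * cliffVol Q e
    = (((-1 : ℝ) ^ (n.choose 2)) * ((List.finRange n).map fun i => Q (e i)).prod) • 1 := by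
  have := cliffList_sq Q e horth (List.nodup_finRange n)
  rw [cliffVol_eq]
  simpa [List.length_finRange] using this

lemma scalar_eval (p q : ℕ) (hn : n = p + q)
    (hQpos : ∀ i : Fin n, (i : ℕ) < p → Q (e i) = 1)
    (hQneg : ∀ i : Fin n, p ≤ (i : ℕ) → Q (e i) = -1)
    (hodd : Odd n) (hsig : ((p : ℤ) - q) % 8 ∈ ({0, 1, 4, 5} : Set ℤ)) :
    ((-1 : ℝ) ^ (n.choose 2)) * ((List.finRange n).map fun i => Q (e i)).prod = 1 := by
  have hprod : ((List.finRange n).map fun i => Q (e i)).prod = (-1 : ℝ) ^ q := by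
    rw [← List.ofFn_eq_map, List.prod_ofFn]
    have h1 : ∀ i : Fin n, Q (e i) = (fun k : ℕ => if k < p then (1 : ℝ) else -1) (i : ℕ) := by
      intro i
      by_cases hi : (i : ℕ) < p
      · simp [hi, hQpos i hi]
      · simp [hi, hQneg i (le_of_not_gt hi)]
    rw [Finset.prod_congr rfl fun i _ => h1 i,
      Fin.prod_univ_eq_prod_range (fun k => if k < p then (1 : ℝ) else -1) n, hn,
      Finset.prod_range_add]
    rw [Finset.prod_eq_one fun k hk => by simp [Finset.mem_range.1 hk],
      Finset.prod_congr rfl fun k _ => (by simp : (if p + k < p then (1:ℝ) else -1) = -1),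
      Finset.prod_const, one_mul, Finset.card_range]
  rw [hprod, ← pow_add]
  obtain ⟨m, hm⟩ := hodd
  simp only [Set.mem_insert_iff, Set.mem_singleton_iff] at hsig
  have hmq : m % 2 = q % 2 := by
    have hpq : (p : ℤ) + (q : ℤ) = 2 * (m : ℤ) + 1 := by exact_mod_cast hn ▸ hm
    omega
  have hch : n.choose 2 = m * (2 * m + 1) := by
    have h2 : 2 * m + 1 - 1 = 2 * m := Nat.succ_sub_one _
    rw [Nat.choose_two_right, hm, h2]
    have h3 : (2 * m + 1) * (2 * m) = 2 * (m * (2 * m + 1)) := by ring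
    rw [h3, Nat.mul_div_cancel_left _ (by norm_num : 0 < 2)]
  have heven : Even (n.choose 2 + q) := by
    rw [Nat.even_iff, hch]
    have h3 : m * (2 * m + 1) = 2 * (m * m) + m := by ring
    omega
  exact heven.neg_one_pow

include horth in
lemma vol_sq (p q : ℕ) (hn : n = p + q)
    (hQpos : ∀ i : Fin n, (i : ℕ) < p → Q (e i) = 1)
    (hQneg : ∀ i : Fin n, p ≤ (i : ℕ) → Q (e i) = -1)
    (hodd : Odd n) (hsig : ((p : ℤ) - q) % 8 ∈ ({0, 1, 4, 5} : Set ℤ)) :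
    cliffVol Q e * cliffVol Q e = 1 := by
  rw [vol_sq' Q e horth, scalar_eval Q e p q hn hQpos hQneg hodd hsig, one_smul]


lemma contractLeft_wedgeList (d : Module.Dual ℝ V) :
    ∀ {l : List (Fin n)}, (∀ j ∈ l, d (e j) = 0) →
      CliffordAlgebra.contractLeft (Q := (0 : QuadraticForm ℝ V)) d (wedgeList e l) = 0
  | [], _ => by
    rw [wedgeList_nil]
    simp
  | a :: t, h => by
    have h1 : d (e a) = 0 := h a (List.mem_cons_self)
    have h2 : ∀ j ∈ t, d (e j) = 0 := fun j hj => h j (List.mem_cons_of_mem _ hj)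
    rw [wedgeList_cons, CliffordAlgebra.contractLeft_ι_mul, contractLeft_wedgeList d h2, h1]
    simp

lemma equivExterior_apply' (x : CliffordAlgebra Q) :
    CliffordAlgebra.equivExterior Q x
      = CliffordAlgebra.changeForm CliffordAlgebra.changeForm.associated_neg_proof x := rfl

include horth in
lemma equivExterior_cliffList : ∀ {l : List (Fin n)}, l.Nodup →
    CliffordAlgebra.equivExterior Q (cliffList Q e l) = wedgeList e l
  | [], _ => by
    rw [cliffList_nil, wedgeList_nil, equivExterior_apply', CliffordAlgebra.changeForm_one]
  | a :: t, h => by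
    rw [cliffList_cons, equivExterior_apply', CliffordAlgebra.changeForm_ι_mul,
      ← equivExterior_apply', equivExterior_cliffList h.of_cons]
    have hd : ∀ j ∈ t, (QuadraticMap.associated (R := ℝ) (-Q)) (e a) (e j) = 0 := by
      intro j hj
      have hne : a ≠ j := fun haj => h.notMem (haj ▸ hj)
      have happ : QuadraticMap.associatedHom ℝ (-Q) (e a) (e j)
          = ⅟(2 : Module.End ℝ ℝ) • ((-Q) (e a + e j) - (-Q) (e a) - (-Q) (e j)) :=
        QuadraticMap.associated_apply ℝ (-Q) (e a) (e j)
      have h0 : (-Q) (e a + e j) - (-Q) (e a) - (-Q) (e j) = 0 := by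
        have h1 := horth a j hne
        simp only [QuadraticMap.polar] at h1
        simp only [QuadraticMap.neg_apply]
        linarith
      rw [show (QuadraticMap.associated (R := ℝ) (-Q)) = QuadraticMap.associatedHom ℝ (-Q) from rfl,
        happ, h0, smul_zero]
    rw [contractLeft_wedgeList e _ hd, sub_zero, wedgeList_cons]

lemma wedgeList_eq_ιMulti (l : List (Fin n)) :
    wedgeList e l = ExteriorAlgebra.ιMulti ℝ l.length (fun i => e (l.get i)) := by
  rw [ExteriorAlgebra.ιMulti_apply]
  show (l.map fun i => ExteriorAlgebra.ι ℝ (e i)).prod = _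
  rw [show (fun i : Fin l.length => ExteriorAlgebra.ι ℝ (e (l.get i)))
      = (fun j => ExteriorAlgebra.ι ℝ (e j)) ∘ l.get from rfl, ← List.map_ofFn, List.ofFn_get]

lemma wedgeList_mem (l : List (Fin n)) : wedgeList e l ∈ ⋀[ℝ]^(l.length) V := by
  rw [wedgeList_eq_ιMulti]
  exact ExteriorAlgebra.ιMulti_range ℝ l.length (Set.mem_range_self _)

lemma wedgeList_eq_zero {l : List (Fin n)} (h : ¬ l.Nodup) : wedgeList e l = 0 := by
  rw [wedgeList_eq_ιMulti]
  rw [List.nodup_iff_injective_get] at h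
  simp only [Function.Injective] at h
  push_neg at h
  obtain ⟨i, j, hij, hne⟩ := h
  exact AlternatingMap.map_eq_zero_of_eq _ _ (congrArg e hij) hne

lemma length_diff_of_nodup :
    ∀ (s l : List (Fin n)), s.Nodup → (∀ i ∈ s, i ∈ l) →
      (l.diff s).length = l.length - s.length
  | [], l, _, _ => by simp
  | a :: s, l, hnd, hsub => by
    rw [List.diff_cons]
    have ha : a ∈ l := hsub a (List.mem_cons_self)
    have hsub' : ∀ i ∈ s, i ∈ l.erase a := fun i hi =>
      (List.mem_erase_of_ne (fun hia => hnd.notMem (by rw [← hia]; exact hi))).2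
        (hsub i (List.mem_cons_of_mem _ hi))
    rw [length_diff_of_nodup s (l.erase a) hnd.of_cons hsub', List.length_erase_of_mem ha,
      Nat.sub_sub, List.length_cons]
    congr 1
    omega

end Aux

section Aux2
variable {V : Type*} [AddCommGroup V] [Module ℝ V] {n : ℕ}
variable (Q : QuadraticForm ℝ V) (e : Module.Basis (Fin n) ℝ V)

lemma prod_map_ι_mem_span :
    ∀ vs : List V,
      (vs.map fun v => ExteriorAlgebra.ι ℝ v).prod ∈
        Submodule.span ℝ {x | ∃ l : List (Fin n), l.length = vs.length ∧ x = wedgeList e l}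
  | [] => Submodule.subset_span ⟨[], rfl, rfl⟩
  | v :: t => by
    have ht := prod_map_ι_mem_span t
    rw [List.map_cons, List.prod_cons]
    refine Submodule.span_induction (p := fun x _ => ExteriorAlgebra.ι ℝ v * x ∈
      Submodule.span ℝ {x | ∃ l : List (Fin n), l.length = (v :: t).length ∧ x = wedgeList e l})
      ?_ ?_ ?_ ?_ ht
    · rintro x ⟨l, hl, rfl⟩
      have hv : ExteriorAlgebra.ι ℝ v = ∑ i, e.repr v i • ExteriorAlgebra.ι ℝ (e i) := by
        have := congrArg (ExteriorAlgebra.ι ℝ) (e.sum_repr v)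
        rw [map_sum] at this
        simp only [map_smul] at this
        exact this.symm
      rw [hv, Finset.sum_mul]
      refine Submodule.sum_mem _ fun i _ => ?_
      rw [smul_mul_assoc]
      exact Submodule.smul_mem _ _
        (Submodule.subset_span ⟨i :: l, by simp [hl], (wedgeList_cons e i l).symm⟩)
    · simp
    · intro x y _ _ hx hy; rw [mul_add]; exact Submodule.add_mem _ hx hy
    · intro c x _ hx; rw [mul_smul_comm]; exact Submodule.smul_mem _ _ hx

lemma hodge_add (f g : ExteriorAlgebra ℝ V) :
    hodge Q e (f + g) = hodge Q e f + hodge Q e g := by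
  simp [hodge, graf, add_mul]

lemma hodge_smul (c : ℝ) (f : ExteriorAlgebra ℝ V) :
    hodge Q e (c • f) = c • hodge Q e f := by
  simp [hodge, graf, smul_mul_assoc]

lemma hodge_zero : hodge Q e (0 : ExteriorAlgebra ℝ V) = 0 := by
  simp [hodge, graf]

lemma hodge_sum {α : Type*} (s : Finset α) (g : α → ExteriorAlgebra ℝ V) :
    hodge Q e (∑ i ∈ s, g i) = ∑ i ∈ s, hodge Q e (g i) := by
  simp [hodge, graf, Finset.sum_mul]

variable (horth : ∀ i j : Fin n, i ≠ j → QuadraticMap.polar Q (e i) (e j) = 0)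

include horth in
lemma hodge_wedgeList_mem {l : List (Fin n)} (hl : l.Nodup) :
    hodge Q e (wedgeList e l) ∈ ⋀[ℝ]^(n - l.length) V := by
  have hsymm : (CliffordAlgebra.equivExterior Q).symm (wedgeList e l) = cliffList Q e l := by
    rw [← equivExterior_cliffList Q e horth hl, LinearEquiv.symm_apply_apply]
  have hvol : (CliffordAlgebra.equivExterior Q).symm (volForm Q e) = cliffVol Q e :=
    LinearEquiv.symm_apply_apply _ _
  have hsub : ∀ i ∈ l, i ∈ List.finRange n := fun i _ => List.mem_finRange i
  obtain ⟨c, hc⟩ := cliffList_mul_diff Q e horth l (List.finRange n) hl hsub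
  have hlen : ((List.finRange n).diff l).length = n - l.length := by
    rw [length_diff_of_nodup l (List.finRange n) hl hsub]
    simp
  rw [hodge, graf, hsymm, hvol, cliffVol_eq, hc, map_smul,
    equivExterior_cliffList Q e horth ((List.nodup_finRange n).diff)]
  exact Submodule.smul_mem _ _ (hlen ▸ wedgeList_mem e _)

include horth in
lemma hodge_exteriorPower_mem {k : ℕ} {x : ExteriorAlgebra ℝ V} (hx : x ∈ ⋀[ℝ]^k V) :
    hodge Q e x ∈ ⋀[ℝ]^(n - k) V := by
  have h1 : x ∈ Submodule.span ℝ (Set.range (ExteriorAlgebra.ιMulti ℝ k (M := V))) := by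
    rw [ExteriorAlgebra.ιMulti_span_fixedDegree]; exact hx
  refine Submodule.span_induction (p := fun x _ => hodge Q e x ∈ ⋀[ℝ]^(n - k) V)
    ?_ ?_ ?_ ?_ h1
  · rintro _ ⟨f, rfl⟩
    have h2 : ExteriorAlgebra.ιMulti ℝ k f = ((List.ofFn f).map fun v => ι ℝ v).prod := by
      rw [ExteriorAlgebra.ιMulti_apply, List.map_ofFn]; rfl
    rw [h2]
    have h3 := prod_map_ι_mem_span e (List.ofFn f)
    rw [List.length_ofFn] at h3
    refine Submodule.span_induction (p := fun x _ => hodge Q e x ∈ ⋀[ℝ]^(n - k) V)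
      ?_ ?_ ?_ ?_ h3
    · rintro _ ⟨l, hl, rfl⟩
      by_cases hnd : l.Nodup
      · exact hl ▸ hodge_wedgeList_mem Q e horth hnd
      · rw [wedgeList_eq_zero e hnd, hodge_zero]; exact zero_mem _
    · show hodge Q e 0 ∈ ⋀[ℝ]^(n - k) V
      rw [hodge_zero]; exact zero_mem _
    · intro a b _ _ ha hb
      show hodge Q e (a + b) ∈ ⋀[ℝ]^(n - k) V
      rw [hodge_add]; exact add_mem ha hb
    · intro c a _ ha
      show hodge Q e (c • a) ∈ ⋀[ℝ]^(n - k) V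
      rw [hodge_smul]; exact Submodule.smul_mem _ _ ha
  · show hodge Q e 0 ∈ ⋀[ℝ]^(n - k) V
    rw [hodge_zero]; exact zero_mem _
  · intro a b _ _ ha hb
    show hodge Q e (a + b) ∈ ⋀[ℝ]^(n - k) V
    rw [hodge_add]; exact add_mem ha hb
  · intro c a _ ha
    show hodge Q e (c • a) ∈ ⋀[ℝ]^(n - k) V
    rw [hodge_smul]; exact Submodule.smul_mem _ _ ha

lemma PLow_add (f g : ExteriorAlgebra ℝ V) : PLow n (f + g) = PLow n f + PLow n g := by
  unfold PLow
  rw [← Finset.sum_add_distrib]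
  refine Finset.sum_congr rfl fun k _ => ?_
  rw [DirectSum.decompose_add, DirectSum.add_apply, Submodule.coe_add]

lemma PLow_smul (c : ℝ) (f : ExteriorAlgebra ℝ V) : PLow n (c • f) = c • PLow n f := by
  unfold PLow
  rw [Finset.smul_sum]
  refine Finset.sum_congr rfl fun k _ => ?_
  rw [DirectSum.decompose_smul, DirectSum.smul_apply, Submodule.coe_smul]

lemma PLow_sub (f g : ExteriorAlgebra ℝ V) : PLow n (f - g) = PLow n f - PLow n g := by
  unfold PLow
  rw [← Finset.sum_sub_distrib]
  refine Finset.sum_congr rfl fun k _ => ?_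
  rw [DirectSum.decompose_sub, DirectSum.sub_apply, Submodule.coe_sub]

lemma PLow_zero : PLow n (0 : ExteriorAlgebra ℝ V) = 0 := by
  simp [PLow]

lemma PLow_sum {α : Type*} (s : Finset α) (g : α → ExteriorAlgebra ℝ V) :
    PLow n (∑ i ∈ s, g i) = ∑ i ∈ s, PLow n (g i) := by
  classical
  induction s using Finset.induction_on with
  | empty => simp [PLow_zero]
  | @insert a s h ih => rw [Finset.sum_insert h, Finset.sum_insert h, PLow_add, ih]

lemma PLow_eq_zero_of_mem {j : ℕ} (hj : n / 2 < j) {x : ExteriorAlgebra ℝ V}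
    (hx : x ∈ ⋀[ℝ]^j V) : PLow n x = 0 := by
  rw [PLow]
  refine Finset.sum_eq_zero fun k hk => ?_
  have hk' : k ≤ n / 2 := Nat.lt_succ_iff.1 (Finset.mem_range.1 hk)
  rw [DirectSum.decompose_of_mem_ne (fun i : ℕ => ⋀[ℝ]^i V) hx (by omega : j ≠ k)]

include horth in
lemma PLow_hodge (hodd : Odd n) {f : ExteriorAlgebra ℝ V} (hf : PLow n f = f) :
    PLow n (hodge Q e f) = 0 := by
  have hf' : hodge Q e f = ∑ k ∈ Finset.range (n / 2 + 1),
      hodge Q e ((DirectSum.decompose (fun i : ℕ => ⋀[ℝ]^i V) f k : ExteriorAlgebra ℝ V)) := by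
    conv_lhs => rw [← hf, PLow]
    rw [hodge_sum]
  rw [hf', PLow_sum]
  refine Finset.sum_eq_zero fun k hk => ?_
  have hk' : k ≤ n / 2 := Nat.lt_succ_iff.1 (Finset.mem_range.1 hk)
  have hmem : ((DirectSum.decompose (fun i : ℕ => ⋀[ℝ]^i V) f k : ⋀[ℝ]^k V) :
      ExteriorAlgebra ℝ V) ∈ ⋀[ℝ]^k V := SetLike.coe_mem _
  have h2 := hodge_exteriorPower_mem Q e horth hmem
  refine PLow_eq_zero_of_mem ?_ h2
  rcases hodd with ⟨m, hm⟩
  omega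

end Aux2
/-- for n odd and p - q ≡ 0,1,4,5 (mod 8), 1 is a two-sided unit for the
truncated Graf products on the lower-truncated subspace. -/
theorem truncated_unit
    (p q n : ℕ) (hn : n = p + q)
    {V : Type*} [AddCommGroup V] [Module ℝ V]
    (Q : QuadraticForm ℝ V) (e : Module.Basis (Fin n) ℝ V)
    (horth : ∀ i j : Fin n, i ≠ j → QuadraticMap.polar Q (e i) (e j) = 0)
    (hQpos : ∀ i : Fin n, (i : ℕ) < p → Q (e i) = 1)
    (hQneg : ∀ i : Fin n, p ≤ (i : ℕ) → Q (e i) = -1)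
    (hodd : Odd n) (hsig : ((p : ℤ) - q) % 8 ∈ ({0, 1, 4, 5} : Set ℤ)) :
    ∀ f : ExteriorAlgebra ℝ V, PLow n f = f →
      (tGrafP Q e f 1 = f ∧ tGrafP Q e 1 f = f) ∧
      (tGrafM Q e f 1 = f ∧ tGrafM Q e 1 f = f) :=  by
  intro f hf
  classical
  set φ := CliffordAlgebra.equivExterior Q with hφ
  set w := cliffVol Q e with hwdef
  set x := φ.symm f with hxdef
  have hww : w * w = 1 := vol_sq Q e horth p q hn hQpos hQneg hodd hsig
  have hcent : ∀ y : CliffordAlgebra Q, y * w = w * y := vol_central Q e horth hodd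
  have hH0 : PLow n (hodge Q e f) = 0 := PLow_hodge Q e horth hodd hf
  have hone : φ (1 : CliffordAlgebra Q) = 1 := by
    rw [hφ, equivExterior_apply' Q 1, CliffordAlgebra.changeForm_one]
  have hsymm1 : φ.symm (1 : ExteriorAlgebra ℝ V) = 1 := by
    rw [← hone, LinearEquiv.symm_apply_apply]
  have hvol : φ.symm (volForm Q e) = w := LinearEquiv.symm_apply_apply _ _
  have hH : ∀ g, hodge Q e g = φ (φ.symm g * w) := fun g => by
    rw [hodge, graf, hvol]
  have hPp : ∀ g, φ.symm (Pplus Q e g) = (1/2 : ℝ) • (φ.symm g * (1 + w)) := by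
    intro g
    rw [Pplus, map_smul, map_add, hH g, LinearEquiv.symm_apply_apply, mul_add, mul_one]
  have hPm : ∀ g, φ.symm (Pminus Q e g) = (1/2 : ℝ) • (φ.symm g * (1 - w)) := by
    intro g
    rw [Pminus, map_smul, map_sub, hH g, LinearEquiv.symm_apply_apply, mul_sub, mul_one]
  have hPp1 : φ.symm (Pplus Q e 1) = (1/2 : ℝ) • ((1 : CliffordAlgebra Q) + w) := by
    rw [hPp 1, hsymm1, one_mul]
  have hPm1 : φ.symm (Pminus Q e 1) = (1/2 : ℝ) • ((1 : CliffordAlgebra Q) - w) := by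
    rw [hPm 1, hsymm1, one_mul]
  have hplus : ((1 : CliffordAlgebra Q) + w) * (1 + w) = (2 : ℝ) • (1 + w) := by
    rw [mul_add, mul_one, add_mul, one_mul, hww, smul_add, two_smul, two_smul]
    abel
  have hminus : ((1 : CliffordAlgebra Q) - w) * (1 - w) = (2 : ℝ) • (1 - w) := by
    rw [mul_sub, mul_one, sub_mul, one_mul, hww, smul_sub, two_smul, two_smul]
    abel
  have hcommp : ∀ y : CliffordAlgebra Q, ((1 : CliffordAlgebra Q) + w) * y = y * (1 + w) := by
    intro y
    rw [add_mul, one_mul, mul_add, mul_one, hcent y]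
  have hcommm : ∀ y : CliffordAlgebra Q, ((1 : CliffordAlgebra Q) - w) * y = y * (1 - w) := by
    intro y
    rw [sub_mul, one_mul, mul_sub, mul_one, hcent y]
  have hxw : φ (x * (1 + w)) = f + hodge Q e f := by
    rw [mul_add, mul_one, map_add, LinearEquiv.apply_symm_apply, ← hH f]
  have hxw' : φ (x * (1 - w)) = f - hodge Q e f := by
    rw [mul_sub, mul_one, map_sub, LinearEquiv.apply_symm_apply, ← hH f]
  have hA : graf Q (Pplus Q e f) (Pplus Q e 1) = ((1:ℝ)/2) • (f + hodge Q e f) := by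
    rw [graf, hPp f, hPp1, smul_mul_assoc, mul_smul_comm, mul_assoc, hplus, mul_smul_comm,
      map_smul, map_smul, map_smul, ← hxdef, hxw, smul_smul, smul_smul]
    norm_num
  have hA' : graf Q (Pplus Q e 1) (Pplus Q e f) = ((1:ℝ)/2) • (f + hodge Q e f) := by
    rw [graf, hPp1, hPp f, smul_mul_assoc, mul_smul_comm, ← mul_assoc, hcommp, mul_assoc,
      hplus, mul_smul_comm, map_smul, map_smul, map_smul, ← hxdef, hxw, smul_smul, smul_smul]
    norm_num
  have hB : graf Q (Pminus Q e f) (Pminus Q e 1) = ((1:ℝ)/2) • (f - hodge Q e f) := by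
    rw [graf, hPm f, hPm1, smul_mul_assoc, mul_smul_comm, mul_assoc, hminus, mul_smul_comm,
      map_smul, map_smul, map_smul, ← hxdef, hxw', smul_smul, smul_smul]
    norm_num
  have hB' : graf Q (Pminus Q e 1) (Pminus Q e f) = ((1:ℝ)/2) • (f - hodge Q e f) := by
    rw [graf, hPm1, hPm f, smul_mul_assoc, mul_smul_comm, ← mul_assoc, hcommm, mul_assoc,
      hminus, mul_smul_comm, map_smul, map_smul, map_smul, ← hxdef, hxw', smul_smul, smul_smul]
    norm_num
  refine ⟨⟨?_, ?_⟩, ?_, ?_⟩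
  · rw [tGrafP, hA, PLow_smul, PLow_add, hf, hH0, add_zero, smul_smul]
    norm_num
  · rw [tGrafP, hA', PLow_smul, PLow_add, hf, hH0, add_zero, smul_smul]
    norm_num
  · rw [tGrafM, hB, PLow_smul, PLow_sub, hf, hH0, sub_zero, smul_smul]
    norm_num
  · rw [tGrafM, hB', PLow_smul, PLow_sub, hf, hH0, sub_zero, smul_smul]
    norm_num
end
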